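/- The only solution (u,v,w) ∈ ℂ³ of the system (S) with (a,b,c) = (0,0,0) is (u,v,w) = (0,0,0) (the degenerate case a = b = c = 0 gives a unique normal form). -/

import Mathlib

/-!
Write `x, y, z` for `u³, v³, w³`. The combination `(19ψ⁴ + λψ)·(ψ⁴ + λψ) + 8ψ²·(ψ⁶ − (5/2)λψ³ − λ²/8)`
equals `27ψ⁸`, so `b = c = 0` forces `ψ = 0` and then `λ = 0`; with `a = 0` also `χ = 0`. So every
elementary symmetric function of `x, y, z` vanishes, they are all roots of `t³`, and
`u = v = w = 0`.
-/

/-- The system (S): with ψ = u³+v³+w³, χ = u³v³+u³w³+v³w³, λ = 216u³v³w³,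
the equations ψ² − 12χ = a, ψ⁴ + λψ = b, ψ⁶ − (5/2)λψ³ − (1/8)λ² = c. -/
def sysS (a b c u v w : ℂ) : Prop :=
  (u ^ 3 + v ^ 3 + w ^ 3) ^ 2
      - 12 * (u ^ 3 * v ^ 3 + u ^ 3 * w ^ 3 + v ^ 3 * w ^ 3) = a ∧
    (u ^ 3 + v ^ 3 + w ^ 3) ^ 4
      + (216 * (u ^ 3 * v ^ 3 * w ^ 3)) * (u ^ 3 + v ^ 3 + w ^ 3) = b ∧
    (u ^ 3 + v ^ 3 + w ^ 3) ^ 6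
      - (5 / 2) * (216 * (u ^ 3 * v ^ 3 * w ^ 3)) * (u ^ 3 + v ^ 3 + w ^ 3) ^ 3
      - (1 / 8) * (216 * (u ^ 3 * v ^ 3 * w ^ 3)) ^ 2 = c

lemma eq_zero_of_quartic_eq_zero_of_sextic_eq_zero {K : Type*} [Field K] [CharZero K]
    {s l : K} (h₄ : s ^ 4 + l * s = 0) (h₆ : s ^ 6 - 5 / 2 * l * s ^ 3 - 1 / 8 * l ^ 2 = 0) :
    s = 0 ∧ l = 0 := by
  have hs : s = 0 := by
    have h : (27 : K) * s ^ 8 = 0 := by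
      linear_combination (19 * s ^ 4 + l * s) * h₄ + 8 * s ^ 2 * h₆
    simpa using h
  refine ⟨hs, pow_eq_zero_iff two_ne_zero |>.mp ?_⟩
  linear_combination -8 * h₆ + (8 * s ^ 5 - 20 * l * s ^ 2) * hs

lemma eq_zero_of_esymm_eq_zero {R : Type*} [CommRing R] [IsReduced R] {x y z : R}
    (h₁ : x + y + z = 0) (h₂ : x * y + x * z + y * z = 0) (h₃ : x * y * z = 0) :
    x = 0 ∧ y = 0 ∧ z = 0 := by
  have vieta (t : R) : (t - x) * (t - y) * (t - z) = t ^ 3 := by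
    linear_combination (-t ^ 2) * h₁ + t * h₂ - h₃
  have root (t : R) (ht : t = x ∨ t = y ∨ t = z) : t = 0 :=
    IsReduced.eq_zero t ⟨3, by rw [← vieta]; rcases ht with rfl | rfl | rfl <;> ring⟩
  exact ⟨root x (by simp), root y (by simp), root z (by simp)⟩

/-- the only solution of (S) with (a,b,c) = (0,0,0) is (0,0,0). -/
theorem unique_solution_of_degenerate_system (u v w : ℂ) :
    sysS 0 0 0 u v w ↔ u = 0 ∧ v = 0 ∧ w = 0 := by
  constructor
  · rintro ⟨h₁, h₂, h₃⟩
    obtain ⟨hψ, hl⟩ := eq_zero_of_quartic_eq_zero_of_sextic_eq_zero h₂ h₃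
    have hχ : u ^ 3 * v ^ 3 + u ^ 3 * w ^ 3 + v ^ 3 * w ^ 3 = 0 := by
      linear_combination -h₁ / 12 + (u ^ 3 + v ^ 3 + w ^ 3) * hψ / 12
    have hprod : u ^ 3 * v ^ 3 * w ^ 3 = 0 := by linear_combination hl / 216
    obtain ⟨hu, hv, hw⟩ := eq_zero_of_esymm_eq_zero hψ hχ hprod
    exact ⟨pow_eq_zero_iff three_ne_zero |>.mp hu, pow_eq_zero_iff three_ne_zero |>.mp hv,
      pow_eq_zero_iff three_ne_zero |>.mp hw⟩
  · rintro ⟨rfl, rfl, rfl⟩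
    norm_num [sysS]
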